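/- arXiv:2303.06646 — 3 statements merged into one kernel-verified Lean document; each statement's English description precedes it below -/
import Mathlib

section
/- Let (M, E) be an exact category and 𝒫 a full additive subcategory of M which is strongly contravariantly finite. Then for any morphism g : Y → Z in M there exist an object P ∈ 𝒫 and a conflation 0 → X → Y ⊕ P → Z → 0 (whose deflation has components g and a 𝒫-precover β : P → Z) which is Hom(𝒫,−)-exact. -/
open CategoryTheory CategoryTheory.Limits

universe v u

namespace PaperQEC

section QuotientCategory

variable {C : Type u} [Category.{v} C] [Preadditive C]

/-- `f` factors through an object belonging to `P`. -/
def FactorsThru (P : Set C) {X Y : C} (f : X ⟶ Y) : Prop :=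
  ∃ Z ∈ P, ∃ (g : X ⟶ Z) (h : Z ⟶ Y), g ≫ h = f

/-- The subgroup of `Hom(X, Y)` generated by morphisms factoring through an object of `P`
(for `P` closed under finite sums this is just the set of such morphisms). -/
def factorIdeal (P : Set C) (X Y : C) : AddSubgroup (X ⟶ Y) :=
  AddSubgroup.closure {f | FactorsThru P f}

lemma factorIdeal_comp_left (P : Set C) {X Y Z : C} {f : X ⟶ Y}
    (hf : f ∈ factorIdeal P X Y) (g : Y ⟶ Z) : f ≫ g ∈ factorIdeal P X Z := by
  have h : factorIdeal P X Y ≤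
      (factorIdeal P X Z).comap (AddMonoidHom.mk' (fun u : X ⟶ Y => u ≫ g)
        (fun a b => Preadditive.add_comp _ _ _ _ _ _)) := by
    refine (AddSubgroup.closure_le _).mpr ?_
    rintro u ⟨Zp, hZp, a, b, rfl⟩
    exact AddSubgroup.mem_comap.mpr
      (AddSubgroup.subset_closure ⟨Zp, hZp, a, b ≫ g, (Category.assoc _ _ _).symm⟩)
  exact h hf

lemma factorIdeal_comp_right (P : Set C) {X Y Z : C} (f : X ⟶ Y) {g : Y ⟶ Z}
    (hg : g ∈ factorIdeal P Y Z) : f ≫ g ∈ factorIdeal P X Z := by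
  have h : factorIdeal P Y Z ≤
      (factorIdeal P X Z).comap (AddMonoidHom.mk' (fun u : Y ⟶ Z => f ≫ u)
        (fun a b => Preadditive.comp_add _ _ _ _ _ _)) := by
    refine (AddSubgroup.closure_le _).mpr ?_
    rintro u ⟨Zp, hZp, a, b, rfl⟩
    exact AddSubgroup.mem_comap.mpr
      (AddSubgroup.subset_closure ⟨Zp, hZp, f ≫ a, b, Category.assoc _ _ _⟩)
  exact h hg

/-- Objects of the quotient (stable) category `C / P`. -/
structure QuotObj (P : Set C) : Type u where
  obj : C

variable (P : Set C)

instance quotCategory : Category.{v} (QuotObj P) where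
  Hom A B := (A.obj ⟶ B.obj) ⧸ factorIdeal P A.obj B.obj
  id A := QuotientAddGroup.mk (𝟙 A.obj)
  comp {A B D} f g :=
    Quotient.liftOn₂ f g (fun a b => QuotientAddGroup.mk (a ≫ b)) (by
      intro a₁ b₁ a₂ b₂ ha hb
      have ha' : -a₁ + a₂ ∈ factorIdeal P A.obj B.obj := QuotientAddGroup.leftRel_apply.mp ha
      have hb' : -b₁ + b₂ ∈ factorIdeal P B.obj D.obj := QuotientAddGroup.leftRel_apply.mp hb
      refine (QuotientAddGroup.eq (s := factorIdeal P A.obj D.obj)).mpr ?_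
      have h1 : (-a₁ + a₂) ≫ b₁ ∈ factorIdeal P A.obj D.obj :=
        factorIdeal_comp_left P ha' b₁
      have h2 : a₂ ≫ (-b₁ + b₂) ∈ factorIdeal P A.obj D.obj :=
        factorIdeal_comp_right P a₂ hb'
      have h3 := AddSubgroup.add_mem _ h1 h2
      have heq : -(a₁ ≫ b₁) + a₂ ≫ b₂ = (-a₁ + a₂) ≫ b₁ + a₂ ≫ (-b₁ + b₂) := by
        simp only [Preadditive.add_comp, Preadditive.comp_add, Preadditive.neg_comp,
          Preadditive.comp_neg]
        abel
      rw [heq]; exact h3)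
  id_comp {A B} f := by
    induction f using Quotient.inductionOn with
    | h a => exact congrArg QuotientAddGroup.mk (Category.id_comp a)
  comp_id {A B} f := by
    induction f using Quotient.inductionOn with
    | h a => exact congrArg QuotientAddGroup.mk (Category.comp_id a)
  assoc {A B D E} f g h := by
    induction f using Quotient.inductionOn with
    | h a =>
    induction g using Quotient.inductionOn with
    | h b =>
    induction h using Quotient.inductionOn with
    | h c => exact congrArg QuotientAddGroup.mk (Category.assoc a b c)

/-- The image in the quotient category of a morphism of `C`. -/
def qmap {X Y : C} (f : X ⟶ Y) : (QuotObj.mk X : QuotObj P) ⟶ QuotObj.mk Y :=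
  QuotientAddGroup.mk f

instance quotPreadditive : Preadditive (QuotObj P) where
  homGroup A B :=
    inferInstanceAs (AddCommGroup ((A.obj ⟶ B.obj) ⧸ factorIdeal P A.obj B.obj))
  add_comp A B D f f' g := by
    induction f using Quotient.inductionOn with
    | h a =>
    induction f' using Quotient.inductionOn with
    | h a' =>
    induction g using Quotient.inductionOn with
    | h b =>
      show QuotientAddGroup.mk ((a + a') ≫ b) =
        QuotientAddGroup.mk (a ≫ b) + QuotientAddGroup.mk (a' ≫ b)
      rw [Preadditive.add_comp]
      rfl
  comp_add A B D f g g' := by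
    induction f using Quotient.inductionOn with
    | h a =>
    induction g using Quotient.inductionOn with
    | h b =>
    induction g' using Quotient.inductionOn with
    | h b' =>
      show QuotientAddGroup.mk (a ≫ (b + b')) =
        QuotientAddGroup.mk (a ≫ b) + QuotientAddGroup.mk (a ≫ b')
      rw [Preadditive.comp_add]
      rfl

end QuotientCategory

section Exact

variable {C : Type u} [Category.{v} C] [Preadditive C]

/-- `k` is a kernel of `f`. -/
def IsKernelOf {K X Y : C} (k : K ⟶ X) (f : X ⟶ Y) : Prop :=
  k ≫ f = 0 ∧ ∀ {T : C} (g : T ⟶ X), g ≫ f = 0 → ∃! t : T ⟶ K, t ≫ k = g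

/-- `c` is a cokernel of `f`. -/
def IsCokernelOf {X Y Q : C} (c : Y ⟶ Q) (f : X ⟶ Y) : Prop :=
  f ≫ c = 0 ∧ ∀ {T : C} (g : Y ⟶ T), f ≫ g = 0 → ∃! t : Q ⟶ T, c ≫ t = g

/-- A class of composable pairs of morphisms (the prospective conflations). -/
abbrev ConfClass (D : Type*) [Category D] :=
  ∀ ⦃X Y Z : D⦄, (X ⟶ Y) → (Y ⟶ Z) → Prop

/-- A Quillen exact structure on an additive category: a class of kernel–cokernel pairs
(conflations), closed under isomorphisms, containing the identities as inflations and
deflations, with inflations and deflations closed under composition, pushouts of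
inflations and pullbacks of deflations existing and being inflations resp. deflations. -/
structure ExactStructure (D : Type u) [Category.{v} D] [Preadditive D] where
  conf : ConfClass D
  ker_of_conf : ∀ {X Y Z : D} {i : X ⟶ Y} {d : Y ⟶ Z}, conf i d → IsKernelOf i d
  coker_of_conf : ∀ {X Y Z : D} {i : X ⟶ Y} {d : Y ⟶ Z}, conf i d → IsCokernelOf d i
  isoClosed : ∀ {X Y Z X' Y' Z' : D} {i : X ⟶ Y} {d : Y ⟶ Z} {i' : X' ⟶ Y'} {d' : Y' ⟶ Z'}
    (eX : X ≅ X') (eY : Y ≅ Y') (eZ : Z ≅ Z'),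
    i ≫ eY.hom = eX.hom ≫ i' → d ≫ eZ.hom = eY.hom ≫ d' → conf i d → conf i' d'
  id_isInflation : ∀ X : D, ∃ (Z : D) (d : X ⟶ Z), conf (𝟙 X) d
  id_isDeflation : ∀ X : D, ∃ (W : D) (i : W ⟶ X), conf i (𝟙 X)
  infl_comp : ∀ {X Y Z : D} (i : X ⟶ Y) (j : Y ⟶ Z),
    (∃ (W : D) (d : Y ⟶ W), conf i d) → (∃ (W : D) (d : Z ⟶ W), conf j d) →
    ∃ (W : D) (d : Z ⟶ W), conf (i ≫ j) d
  defl_comp : ∀ {X Y Z : D} (p : X ⟶ Y) (q : Y ⟶ Z),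
    (∃ (W : D) (i : W ⟶ X), conf i p) → (∃ (W : D) (i : W ⟶ Y), conf i q) →
    ∃ (W : D) (i : W ⟶ X), conf i (p ≫ q)
  infl_pushout : ∀ {X Y : D} (i : X ⟶ Y), (∃ (W : D) (d : Y ⟶ W), conf i d) →
    ∀ {A : D} (f : X ⟶ A), ∃ (B : D) (i' : A ⟶ B) (g : Y ⟶ B),
      (∃ (W : D) (d : B ⟶ W), conf i' d) ∧ IsPushout i f g i'
  defl_pullback : ∀ {Y Z : D} (p : Y ⟶ Z), (∃ (W : D) (i : W ⟶ Y), conf i p) →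
    ∀ {B : D} (f : B ⟶ Z), ∃ (A : D) (p' : A ⟶ B) (g : A ⟶ Y),
      (∃ (W : D) (i : W ⟶ A), conf i p') ∧ IsPullback g p' p f

/-- `i` is an inflation, i.e. the first map of some conflation. -/
def IsInflation (E : ConfClass C) {X Y : C} (i : X ⟶ Y) : Prop :=
  ∃ (Z : C) (d : Y ⟶ Z), E i d

/-- `d` is a deflation, i.e. the second map of some conflation. -/
def IsDeflation (E : ConfClass C) {Y Z : C} (d : Y ⟶ Z) : Prop :=
  ∃ (X : C) (i : X ⟶ Y), E i d

/-- `P` is a full additive subcategory: nonempty, closed under isomorphisms,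
finite sums and summands. -/
structure IsAddSubcat [HasBinaryBiproducts C] (P : Set C) : Prop where
  nonempty : P.Nonempty
  isoClosed : ∀ {X Y : C}, (X ≅ Y) → X ∈ P → Y ∈ P
  sumClosed : ∀ {X Y : C}, X ∈ P → Y ∈ P → (X ⊞ Y) ∈ P
  summandClosed : ∀ {X Y : C} (s : X ⟶ Y) (r : Y ⟶ X), s ≫ r = 𝟙 X → Y ∈ P → X ∈ P

/-- `f : Q ⟶ X` is a `P`-precover of `X`. -/
def IsPrecover (P : Set C) {Q X : C} (f : Q ⟶ X) : Prop :=
  Q ∈ P ∧ ∀ (Q' : C), Q' ∈ P → ∀ g : Q' ⟶ X, ∃ h : Q' ⟶ Q, h ≫ f = g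

/-- `f : X ⟶ Q` is a `P`-preenvelope of `X`. -/
def IsPreenvelope (P : Set C) {X Q : C} (f : X ⟶ Q) : Prop :=
  Q ∈ P ∧ ∀ (Q' : C), Q' ∈ P → ∀ g : X ⟶ Q', ∃ h : Q ⟶ Q', f ≫ h = g

/-- `P` is strongly contravariantly finite: every object has a `P`-precover
which is a deflation. -/
def StronglyContraFinite (E : ConfClass C) (P : Set C) : Prop :=
  ∀ X : C, ∃ (Q : C) (f : Q ⟶ X), IsPrecover P f ∧ IsDeflation E f

/-- `P` is strongly covariantly finite: every object has a `P`-preenvelope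
which is an inflation. -/
def StronglyCovFinite (E : ConfClass C) (P : Set C) : Prop :=
  ∀ X : C, ∃ (Q : C) (f : X ⟶ Q), IsPreenvelope P f ∧ IsInflation E f

/-- The pair `(i, d)` is `Hom(P,-)`-exact: for every `Q ∈ P`, the sequence
`0 → Hom(Q,X) → Hom(Q,Y) → Hom(Q,Z) → 0` is exact. -/
def HomCovExact (P : Set C) {X Y Z : C} (i : X ⟶ Y) (d : Y ⟶ Z) : Prop :=
  ∀ Q : C, Q ∈ P →
    (∀ g : Q ⟶ X, g ≫ i = 0 → g = 0) ∧
    (∀ u : Q ⟶ Y, u ≫ d = 0 → ∃ g : Q ⟶ X, g ≫ i = u) ∧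
    (∀ h : Q ⟶ Z, ∃ u : Q ⟶ Y, u ≫ d = h)

/-- The pair `(i, d)` is `Hom(-,P)`-exact: for every `Q ∈ P`, the sequence
`0 → Hom(Z,Q) → Hom(Y,Q) → Hom(X,Q) → 0` is exact. -/
def HomContraExact (P : Set C) {X Y Z : C} (i : X ⟶ Y) (d : Y ⟶ Z) : Prop :=
  ∀ Q : C, Q ∈ P →
    (∀ g : Z ⟶ Q, d ≫ g = 0 → g = 0) ∧
    (∀ u : Y ⟶ Q, i ≫ u = 0 → ∃ g : Z ⟶ Q, d ≫ g = u) ∧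
    (∀ h : X ⟶ Q, ∃ u : Y ⟶ Q, i ≫ u = h)

/-- Condition (▲): `P` is strongly covariantly finite and every `X` admits a conflation
`0 → X → Q₀ → Q₁ → 0` with `Q₀, Q₁ ∈ P` whose inflation is a `P`-preenvelope. -/
def CondEnv (E : ConfClass C) (P : Set C) : Prop :=
  StronglyCovFinite E P ∧
  ∀ X : C, ∃ (Q₀ Q₁ : C) (α : X ⟶ Q₀) (q : Q₀ ⟶ Q₁),
    E α q ∧ Q₀ ∈ P ∧ Q₁ ∈ P ∧ IsPreenvelope P α

/-- Condition (▼): `P` is strongly contravariantly finite and every `X` admits a conflation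
`0 → P₁ → P₀ → X → 0` with `P₀, P₁ ∈ P` whose deflation is a `P`-precover. -/
def CondCov (E : ConfClass C) (P : Set C) : Prop :=
  StronglyContraFinite E P ∧
  ∀ X : C, ∃ (P₀ P₁ : C) (i : P₁ ⟶ P₀) (β : P₀ ⟶ X),
    E i β ∧ P₀ ∈ P ∧ P₁ ∈ P ∧ IsPrecover P β

/-- `P` is a pseudo-cluster tilting subcategory. -/
def PseudoClusterTilting (E : ConfClass C) (P : Set C) : Prop :=
  CondEnv E P ∧ CondCov E P

/-- The conflation `(i, d)` splits. -/
def Splits {X Y Z : C} (i : X ⟶ Y) (d : Y ⟶ Z) : Prop :=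
  (∃ r : Y ⟶ X, i ≫ r = 𝟙 X) ∧ ∃ s : Z ⟶ Y, s ≫ d = 𝟙 Z

/-- `P` is self-orthogonal with respect to the class `cl` of conflations: every
conflation in `cl` with both end terms in `P` splits. -/
def SelfOrthWrt (P : Set C) (cl : ConfClass C) : Prop :=
  ∀ ⦃X Y Z : C⦄ (i : X ⟶ Y) (d : Y ⟶ Z), cl i d → X ∈ P → Z ∈ P → Splits i d

/-- `P` is a cluster tilting subcategory: a pseudo-cluster tilting subcategory which is
self-orthogonal with respect to all conflations. -/
def ClusterTilting (E : ConfClass C) (P : Set C) : Prop :=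
  PseudoClusterTilting E P ∧ SelfOrthWrt P E

/-- The class `𝒮` of conflations. -/
def memS (E : ConfClass C) (P : Set C) ⦃S₁ S₂ S₃ : C⦄ (i : S₁ ⟶ S₂) (d : S₂ ⟶ S₃) : Prop :=
  E i d ∧ ∃ (U M₁ M₂ : C) (u₁ : U ⟶ S₁) (p₁ : S₁ ⟶ M₁) (u₂ : U ⟶ S₂) (p₂ : S₂ ⟶ M₂)
    (m : M₁ ⟶ M₂) (q : M₂ ⟶ S₃),
    E u₁ p₁ ∧ E u₂ p₂ ∧ E m q ∧
    HomCovExact P u₂ p₂ ∧ HomContraExact P m q ∧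
    u₁ ≫ i = u₂ ∧ i ≫ p₂ = p₁ ≫ m ∧ d = p₂ ≫ q

/-- The class `𝒯` of conflations. -/
def memT (E : ConfClass C) (P : Set C) ⦃T₁ T₂ T₃ : C⦄ (i : T₁ ⟶ T₂) (d : T₂ ⟶ T₃) : Prop :=
  E i d ∧ ∃ (V N₂ N₃ : C) (n₁ : T₁ ⟶ N₂) (n₂ : N₂ ⟶ N₃) (j₂ : N₂ ⟶ T₂) (v₂ : T₂ ⟶ V)
    (j₃ : N₃ ⟶ T₃) (v₃ : T₃ ⟶ V),
    E n₁ n₂ ∧ E j₂ v₂ ∧ E j₃ v₃ ∧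
    HomCovExact P n₁ n₂ ∧ HomContraExact P j₂ v₂ ∧
    i = n₁ ≫ j₂ ∧ n₂ ≫ j₃ = j₂ ≫ d ∧ d ≫ v₃ = v₂

end Exact

section AbelianDefs

/-- A preadditive category is abelian (in the sense of Definition 2.1 of the paper) if it
has kernels and cokernels and the canonical morphism from the coimage to the image of any
morphism is an isomorphism. -/
def IsAbelianCat (D : Type*) [Category D] [Preadditive D] : Prop :=
  ∃ (hk : HasKernels D) (hc : HasCokernels D),
    ∀ {X Y : D} (f : X ⟶ Y),
      IsIso (@CategoryTheory.Abelian.coimageImageComparison D _ _ X Y f _ _ _ _)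

/-- A preadditive category is semi-abelian if it has kernels and cokernels and the
canonical morphism from the coimage to the image of any morphism is both an epimorphism
and a monomorphism. -/
def IsSemiAbelianCat (D : Type*) [Category D] [Preadditive D] : Prop :=
  ∃ (hk : HasKernels D) (hc : HasCokernels D),
    ∀ {X Y : D} (f : X ⟶ Y),
      Mono (@CategoryTheory.Abelian.coimageImageComparison D _ _ X Y f _ _ _ _) ∧
      Epi (@CategoryTheory.Abelian.coimageImageComparison D _ _ X Y f _ _ _ _)

end AbelianDefs

section ConflationCategory

variable {M : Type u} [Category.{v} M] [Preadditive M]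

/-- Objects of the category `E(M)` of conflations: conflations `0 → X₁ → X₂ → X₃ → 0`
of the exact category `(M, E)`. -/
structure ConfObj (E : ExactStructure M) : Type max u v where
  X₁ : M
  X₂ : M
  X₃ : M
  i : X₁ ⟶ X₂
  d : X₂ ⟶ X₃
  conf : E.conf i d

variable {E : ExactStructure M}

/-- The additive group of morphisms of conflations: triples of morphisms making the two
squares commute. -/
def confHomGroup (A B : ConfObj E) :
    AddSubgroup ((A.X₁ ⟶ B.X₁) × (A.X₂ ⟶ B.X₂) × (A.X₃ ⟶ B.X₃)) where
  carrier := {t | A.i ≫ t.2.1 = t.1 ≫ B.i ∧ A.d ≫ t.2.2 = t.2.1 ≫ B.d}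
  zero_mem' := by simp
  add_mem' := by
    rintro a b ⟨ha₁, ha₂⟩ ⟨hb₁, hb₂⟩
    refine ⟨?_, ?_⟩ <;>
      simp [Preadditive.comp_add, Preadditive.add_comp, ha₁, ha₂, hb₁, hb₂]
  neg_mem' := by
    rintro a ⟨h₁, h₂⟩
    refine ⟨?_, ?_⟩ <;> simp [h₁, h₂]

instance confCategoryStruct : CategoryStruct.{v} (ConfObj E) where
  Hom A B := ↥(confHomGroup A B)
  id A := ⟨(𝟙 _, 𝟙 _, 𝟙 _), by constructor <;> simp⟩
  comp {A B D} f g := ⟨(f.1.1 ≫ g.1.1, f.1.2.1 ≫ g.1.2.1, f.1.2.2 ≫ g.1.2.2), by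
    obtain ⟨hf₁, hf₂⟩ := f.2
    obtain ⟨hg₁, hg₂⟩ := g.2
    constructor
    · rw [← Category.assoc, hf₁, Category.assoc, hg₁, ← Category.assoc]
    · rw [← Category.assoc, hf₂, Category.assoc, hg₂, ← Category.assoc]⟩

/-- Degree `-1` component of a morphism of conflations. -/
def homC₁ {A B : ConfObj E} (f : A ⟶ B) : A.X₁ ⟶ B.X₁ := f.1.1

/-- Degree `0` component of a morphism of conflations. -/
def homC₂ {A B : ConfObj E} (f : A ⟶ B) : A.X₂ ⟶ B.X₂ := f.1.2.1

/-- Degree `1` component of a morphism of conflations. -/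
def homC₃ {A B : ConfObj E} (f : A ⟶ B) : A.X₃ ⟶ B.X₃ := f.1.2.2

lemma confHom_ext {A B : ConfObj E} {f g : A ⟶ B} (h₁ : homC₁ f = homC₁ g)
    (h₂ : homC₂ f = homC₂ g) (h₃ : homC₃ f = homC₃ g) : f = g := by
  apply Subtype.ext
  show (homC₁ f, homC₂ f, homC₃ f) = (homC₁ g, homC₂ g, homC₃ g)
  rw [h₁, h₂, h₃]

@[simp] lemma homC₁_id (A : ConfObj E) : homC₁ (𝟙 A) = 𝟙 A.X₁ := rfl
@[simp] lemma homC₂_id (A : ConfObj E) : homC₂ (𝟙 A) = 𝟙 A.X₂ := rfl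
@[simp] lemma homC₃_id (A : ConfObj E) : homC₃ (𝟙 A) = 𝟙 A.X₃ := rfl
@[simp] lemma homC₁_comp {A B D : ConfObj E} (f : A ⟶ B) (g : B ⟶ D) :
    homC₁ (f ≫ g) = homC₁ f ≫ homC₁ g := rfl
@[simp] lemma homC₂_comp {A B D : ConfObj E} (f : A ⟶ B) (g : B ⟶ D) :
    homC₂ (f ≫ g) = homC₂ f ≫ homC₂ g := rfl
@[simp] lemma homC₃_comp {A B D : ConfObj E} (f : A ⟶ B) (g : B ⟶ D) :
    homC₃ (f ≫ g) = homC₃ f ≫ homC₃ g := rfl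

instance confCategory : Category.{v} (ConfObj E) where
  id_comp f := confHom_ext (by simp) (by simp) (by simp)
  comp_id f := confHom_ext (by simp) (by simp) (by simp)
  assoc f g h := confHom_ext (by simp) (by simp) (by simp)

instance confHomAddCommGroup (A B : ConfObj E) : AddCommGroup (A ⟶ B) :=
  inferInstanceAs (AddCommGroup ↥(confHomGroup A B))

@[simp] lemma homC₁_add {A B : ConfObj E} (f g : A ⟶ B) :
    homC₁ (f + g) = homC₁ f + homC₁ g := rfl
@[simp] lemma homC₂_add {A B : ConfObj E} (f g : A ⟶ B) :
    homC₂ (f + g) = homC₂ f + homC₂ g := rfl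
@[simp] lemma homC₃_add {A B : ConfObj E} (f g : A ⟶ B) :
    homC₃ (f + g) = homC₃ f + homC₃ g := rfl

instance confPreadditive : Preadditive (ConfObj E) where
  homGroup A B := inferInstance
  add_comp A B D f f' g :=
    confHom_ext (by simp [Preadditive.add_comp]) (by simp [Preadditive.add_comp])
      (by simp [Preadditive.add_comp])
  comp_add A B D f g g' :=
    confHom_ext (by simp [Preadditive.comp_add]) (by simp [Preadditive.comp_add])
      (by simp [Preadditive.comp_add])

/-- The degree-wise class of conflations on `E(M)`: a short sequence of conflations is a
conflation if it is a conflation of `M` in each degree. -/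
def degConf (E : ExactStructure M) : ConfClass (ConfObj E) := fun _ _ _ f g =>
  E.conf (homC₁ f) (homC₁ g) ∧ E.conf (homC₂ f) (homC₂ g) ∧ E.conf (homC₃ f) (homC₃ g)

/-- The class `E₀`: degree-wise conflations splitting in degree `0`. -/
def degConf₀ (E : ExactStructure M) : ConfClass (ConfObj E) := fun _ _ _ f g =>
  degConf E f g ∧ Splits (homC₂ f) (homC₂ g)

/-- The class `E₀⁻¹`: degree-wise conflations splitting in degrees `-1` and `0`. -/
def degConf₀neg (E : ExactStructure M) : ConfClass (ConfObj E) := fun _ _ _ f g =>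
  degConf E f g ∧ Splits (homC₁ f) (homC₁ g) ∧ Splits (homC₂ f) (homC₂ g)

/-- The class `E₀¹`: degree-wise conflations splitting in degrees `0` and `1`. -/
def degConf₀pos (E : ExactStructure M) : ConfClass (ConfObj E) := fun _ _ _ f g =>
  degConf E f g ∧ Splits (homC₂ f) (homC₂ g) ∧ Splits (homC₃ f) (homC₃ g)

/-- The full subcategory `S(M)` of `E(M)` consisting of the split conflations. -/
def splitObjs (E : ExactStructure M) : Set (ConfObj E) :=
  {A | Splits A.i A.d}

end ConflationCategory


/-!
The map `(g β) : Y ⊞ P ⟶ Z` factors as `1 ⊕ β : Y ⊞ P ⟶ Y ⊞ Z` followed by `(g 1) : Y ⊞ Z ⟶ Z`.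
The first is a pullback of the deflation `β` along the projection `Y ⊞ Z ⟶ Z`, and the second is
that projection composed with a shear automorphism of `Y ⊞ Z`; split sequences being conflations
(push out the conflation `0 ⟶ B ⟶ B` along `0 ⟶ A`), both are deflations, hence so is `(g β)`.
Its conflation is `Hom(𝒫, -)`-exact on the left since the inflation is a kernel, and on the right
since `β` is a `𝒫`-precover.
-/

section

variable {M : Type u} [Category.{v} M] [Preadditive M]

lemma IsCokernelOf.exists_iso {X Y Q Q' : M} {f : X ⟶ Y} {c : Y ⟶ Q} {c' : Y ⟶ Q'}
    (hc : IsCokernelOf c f) (hc' : IsCokernelOf c' f) : ∃ e : Q ≅ Q', c ≫ e.hom = c' := by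
  obtain ⟨t, ht, -⟩ := hc.2 c' hc'.1
  obtain ⟨s, hs, -⟩ := hc'.2 c hc.1
  refine ⟨⟨t, s, ?_, ?_⟩, ht⟩
  · exact (hc.2 c hc.1).unique (by rw [← Category.assoc, ht, hs]) (Category.comp_id c)
  · exact (hc'.2 c' hc'.1).unique (by rw [← Category.assoc, hs, ht]) (Category.comp_id c')

lemma homCovExact_of_isKernelOf (P : Set M) {X Y Z : M} {i : X ⟶ Y} {d : Y ⟶ Z}
    (hi : IsKernelOf i d) (hd : ∀ Q ∈ P, ∀ h : Q ⟶ Z, ∃ u : Q ⟶ Y, u ≫ d = h) :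
    HomCovExact P i d := by
  refine fun Q hQ => ⟨fun g hg => ?_, fun u hu => ?_, hd Q hQ⟩
  · exact (hi.2 0 (by simp)).unique hg (by simp)
  · exact (hi.2 u hu).exists

section Biproducts

variable [HasBinaryBiproducts M]

lemma isPushout_zero_zero_inr_inl (W A B : M) :
    IsPushout (0 : W ⟶ B) (0 : W ⟶ A) biprod.inr biprod.inl :=
  IsPushout.of_isColimit (PushoutCocone.IsColimit.mk (by simp)
    (fun s => biprod.desc s.inr s.inl) (by simp) (by simp)
    (fun _ _ h₁ h₂ => by ext <;> simp [h₁, h₂]))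

lemma isPullback_snd_map_id (Y : M) {B Z : M} (β : B ⟶ Z) :
    IsPullback biprod.snd (biprod.map (𝟙 Y) β) β biprod.snd :=
  IsPullback.of_isLimit (PullbackCone.IsLimit.mk (fst := biprod.snd)
    (snd := biprod.map (𝟙 Y) β) (by simp)
    (fun s => biprod.lift (s.snd ≫ biprod.fst) s.fst) (by simp)
    (fun s => by ext <;> simp [s.condition])
    (fun _ _ h₁ h₂ => by ext <;> simp [← h₁, ← h₂]))

lemma isCokernelOf_snd_inl (A B : M) :
    IsCokernelOf (biprod.snd : A ⊞ B ⟶ B) biprod.inl :=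
  ⟨biprod.inl_snd, fun g hg =>
    ⟨biprod.inr ≫ g, by ext <;> simp [hg], fun t ht => by simp [← ht]⟩⟩

end Biproducts

namespace ExactStructure

variable (E : ExactStructure M)

lemma isInflation_comp_iso {X Y Y' : M} {i : X ⟶ Y} (hi : IsInflation E.conf i) (e : Y ≅ Y') :
    IsInflation E.conf (i ≫ e.hom) := by
  obtain ⟨Z, d, h⟩ := hi
  exact ⟨Z, e.inv ≫ d, E.isoClosed (Iso.refl X) e (Iso.refl Z) (by simp) (by simp) h⟩

lemma isDeflation_iso_comp {Y Y' Z : M} {d : Y ⟶ Z} (hd : IsDeflation E.conf d) (e : Y' ≅ Y) :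
    IsDeflation E.conf (e.hom ≫ d) := by
  obtain ⟨X, i, h⟩ := hd
  exact ⟨X, i ≫ e.inv, E.isoClosed (Iso.refl X) e.symm (Iso.refl Z) (by simp) (by simp) h⟩

lemma isInflation_of_isPushout {W Y A B : M} {i : W ⟶ Y} {f : W ⟶ A} {g : Y ⟶ B}
    {i' : A ⟶ B} (hi : IsInflation E.conf i) (h : IsPushout i f g i') :
    IsInflation E.conf i' := by
  obtain ⟨B₀, i₀, g₀, hi₀, h₀⟩ := E.infl_pushout i hi f
  simpa using E.isInflation_comp_iso hi₀ (IsPushout.isoIsPushout _ _ h₀ h)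

lemma isDeflation_of_isPullback {A B Y Z : M} {p : Y ⟶ Z} {f : B ⟶ Z} {g : A ⟶ Y}
    {p' : A ⟶ B} (hp : IsDeflation E.conf p) (h : IsPullback g p' p f) :
    IsDeflation E.conf p' := by
  obtain ⟨A₀, p₀, g₀, hp₀, h₀⟩ := E.defl_pullback p hp f
  simpa using E.isDeflation_iso_comp hp₀ (IsPullback.isoIsPullback _ _ h h₀)

lemma conf_of_isCokernelOf {X Y Z Z' : M} {i : X ⟶ Y} {d : Y ⟶ Z} {c : Y ⟶ Z'}
    (h : E.conf i d) (hc : IsCokernelOf c i) : E.conf i c := by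
  obtain ⟨e, he⟩ := (E.coker_of_conf h).exists_iso hc
  exact E.isoClosed (Iso.refl X) (Iso.refl Y) e (by simp) (by simpa using he) h

section Biproducts

variable [HasBinaryBiproducts M]

lemma isInflation_inl (A B : M) : IsInflation E.conf (biprod.inl : A ⟶ A ⊞ B) := by
  obtain ⟨W, i, hi⟩ := E.id_isDeflation B
  obtain rfl : i = 0 := by simpa using (E.ker_of_conf hi).1
  exact E.isInflation_of_isPushout ⟨B, 𝟙 B, hi⟩ (isPushout_zero_zero_inr_inl W A B)

lemma conf_inl_snd (A B : M) : E.conf (biprod.inl : A ⟶ A ⊞ B) biprod.snd := by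
  obtain ⟨Z, d, h⟩ := E.isInflation_inl A B
  exact E.conf_of_isCokernelOf h (isCokernelOf_snd_inl A B)

lemma isDeflation_desc_id {Y Z : M} (g : Y ⟶ Z) :
    IsDeflation E.conf (biprod.desc g (𝟙 Z)) := by
  have h : biprod.desc g (𝟙 Z) = (Biprod.unipotentUpper g).hom ≫ biprod.snd := by
    ext <;> simp [Biprod.ofComponents]
  rw [h]
  exact E.isDeflation_iso_comp ⟨Y, _, E.conf_inl_snd Y Z⟩ _

lemma isDeflation_desc {Y P Z : M} (g : Y ⟶ Z) {β : P ⟶ Z} (hβ : IsDeflation E.conf β) :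
    IsDeflation E.conf (biprod.desc g β) := by
  have h : biprod.desc g β = biprod.map (𝟙 Y) β ≫ biprod.desc g (𝟙 Z) := by
    ext <;> simp
  rw [h]
  exact E.defl_comp _ _ (E.isDeflation_of_isPullback hβ (isPullback_snd_map_id Y β))
    (E.isDeflation_desc_id g)

end Biproducts

end ExactStructure

end

theorem exists_homCovExact_conflation_general {M : Type u} [Category.{v} M] [Preadditive M]
    [HasBinaryBiproducts M] (E : ExactStructure M) (P : Set M)
    (hcontra : StronglyContraFinite E.conf P) {Y Z : M} (g : Y ⟶ Z) :
    ∃ (Pₒ X : M), Pₒ ∈ P ∧ ∃ (β : Pₒ ⟶ Z), IsPrecover P β ∧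
      ∃ (i : X ⟶ Y ⊞ Pₒ), E.conf i (biprod.desc g β) ∧
        HomCovExact P i (biprod.desc g β) := by
  obtain ⟨Pₒ, β, hβ, hβdefl⟩ := hcontra Z
  obtain ⟨X, i, hconf⟩ := E.isDeflation_desc g hβdefl
  refine ⟨Pₒ, X, hβ.1, β, hβ, i, hconf, homCovExact_of_isKernelOf P (E.ker_of_conf hconf) ?_⟩
  intro Q hQ h
  obtain ⟨q, hq⟩ := hβ.2 Q hQ h
  exact ⟨q ≫ biprod.inr, by simp [hq]⟩

/-- if `𝒫` is strongly contravariantly finite, every morphism `g : Y ⟶ Z`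
fits into a conflation `0 → X → Y ⊕ P → Z → 0` (with deflation of components `g` and a
`𝒫`-precover `β`) which is `Hom(𝒫,-)`-exact. -/
theorem exists_homCovExact_conflation {M : Type u} [Category.{v} M] [Preadditive M]
    [HasBinaryBiproducts M] (E : ExactStructure M) (P : Set M) (hP : IsAddSubcat P)
    (hcontra : StronglyContraFinite E.conf P) {Y Z : M} (g : Y ⟶ Z) :
    ∃ (Pₒ X : M), Pₒ ∈ P ∧ ∃ (β : Pₒ ⟶ Z), IsPrecover P β ∧
      ∃ (i : X ⟶ Y ⊞ Pₒ), E.conf i (biprod.desc g β) ∧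
        HomCovExact P i (biprod.desc g β) :=
  exists_homCovExact_conflation_general E P hcontra g

end PaperQEC
end

section
/- Let (M, E) be an exact category and 𝒫 a full additive subcategory of M satisfying condition (▼). Then the quotient category M/𝒫 has kernels: every morphism of M/𝒫 admits a kernel. More precisely, if f : X → Y is a morphism of M, 0 → P1 → P0 →β Y → 0 is a conflation with P0, P1 ∈ 𝒫 and β a 𝒫-precover, and k : K → X is obtained by forming the pullback of f along β, then k̄ : K → X is the kernel of f̄ in M/𝒫. -/
open CategoryTheory CategoryTheory.Limits

universe v u

namespace PaperQEC

/-!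
Write `k : K ⟶ X` for the pullback of the precover `β : P₀ ⟶ Y` along `f`. If `g ≫ f`
factors through `𝒫`, it factors through `β`, so `g` lifts along `k`. For uniqueness: a
morphism into `X` factoring through `𝒫` lifts along `k` to one into `K` factoring through `𝒫`
(lift its `𝒫`-part through `β`), and morphisms killed by `k` factor through `P₁`, since
`j : P₁ ⟶ P₀` induces a weak kernel of `k`. So `x ≫ k ≡ 0` forces `x ≡ 0` modulo `𝒫`.
-/

section QuotientKernel

variable {C : Type u} [Category.{v} C] [Preadditive C] (P : Set C)

lemma FactorsThru.mem_factorIdeal {X Y : C} {f : X ⟶ Y} (hf : FactorsThru P f) :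
    f ∈ factorIdeal P X Y :=
  AddSubgroup.subset_closure hf

lemma qmap_surjective (X Y : C) : Function.Surjective (qmap P (X := X) (Y := Y)) :=
  QuotientAddGroup.mk_surjective

lemma qmap_comp {X Y Z : C} (f : X ⟶ Y) (g : Y ⟶ Z) :
    qmap P (f ≫ g) = qmap P f ≫ qmap P g := rfl

lemma qmap_sub {X Y : C} (f g : X ⟶ Y) : qmap P (f - g) = qmap P f - qmap P g := rfl

lemma qmap_eq_zero_iff {X Y : C} (f : X ⟶ Y) : qmap P f = 0 ↔ f ∈ factorIdeal P X Y :=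
  QuotientAddGroup.eq_zero_iff f

lemma IsPrecover.factorIdeal_le_range {Q Y : C} {β : Q ⟶ Y} (hβ : IsPrecover P β) (T : C) :
    factorIdeal P T Y ≤ (Preadditive.rightComp T β).range := by
  refine (AddSubgroup.closure_le _).mpr ?_
  rintro _ ⟨Z, hZ, a, b, rfl⟩
  obtain ⟨c, rfl⟩ := hβ.2 Z hZ b
  exact ⟨a ≫ c, Category.assoc _ _ _⟩

variable {X Y P₀ P₁ K : C} {f : X ⟶ Y} {β : P₀ ⟶ Y} {k : K ⟶ X} {l : K ⟶ P₀} {j : P₁ ⟶ P₀}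

lemma factorIdeal_le_map_of_isPullback (hpb : IsPullback k l f β) (hβ : IsPrecover P β)
    (T : C) :
    factorIdeal P T X ≤ (factorIdeal P T K).map (Preadditive.rightComp T k) := by
  refine (AddSubgroup.closure_le _).mpr ?_
  rintro _ ⟨Z, hZ, a, b, rfl⟩
  obtain ⟨c, hc⟩ := hβ.2 Z hZ (b ≫ f)
  refine ⟨a ≫ hpb.lift b c hc.symm, FactorsThru.mem_factorIdeal P ⟨Z, hZ, a, _, rfl⟩, ?_⟩
  simp [Preadditive.rightComp]

lemma factorsThru_of_isPullback_of_comp_eq_zero (hpb : IsPullback k l f β)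
    (hj : IsKernelOf j β) (hP₁ : P₁ ∈ P) {T : C} {x : T ⟶ K} (hx : x ≫ k = 0) :
    FactorsThru P x := by
  obtain ⟨w, hw, -⟩ := hj.2 (x ≫ l) (by
    rw [Category.assoc, ← hpb.w, ← Category.assoc, hx, zero_comp])
  refine ⟨P₁, hP₁, w, hpb.lift 0 j (by rw [zero_comp, hj.1]), hpb.hom_ext ?_ ?_⟩
  · simp [hx]
  · simp [hw]

lemma mem_factorIdeal_of_isPullback_of_comp_mem (hpb : IsPullback k l f β)
    (hβ : IsPrecover P β) (hj : IsKernelOf j β) (hP₁ : P₁ ∈ P) {T : C} {x : T ⟶ K}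
    (hx : x ≫ k ∈ factorIdeal P T X) : x ∈ factorIdeal P T K := by
  obtain ⟨z, hz, hzk⟩ := factorIdeal_le_map_of_isPullback P hpb hβ T hx
  have hxz : (x - z) ≫ k = 0 := by
    rw [Preadditive.sub_comp, ← hzk, Preadditive.rightComp]
    exact sub_self _
  have hxz_mem := (factorsThru_of_isPullback_of_comp_eq_zero P hpb hj hP₁ hxz).mem_factorIdeal P
  simpa using add_mem hz hxz_mem

theorem isKernelOf_qmap_of_isPullback (hpb : IsPullback k l f β) (hβ : IsPrecover P β)
    (hj : IsKernelOf j β) (hP₁ : P₁ ∈ P) : IsKernelOf (qmap P k) (qmap P f) := by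
  refine ⟨?_, ?_⟩
  · rw [← qmap_comp, qmap_eq_zero_iff, hpb.w]
    exact FactorsThru.mem_factorIdeal P ⟨P₀, hβ.1, l, β, rfl⟩
  · rintro ⟨T⟩ g' hg
    obtain ⟨g, rfl⟩ := qmap_surjective P T X g'
    rw [← qmap_comp, qmap_eq_zero_iff] at hg
    obtain ⟨x, hx : x ≫ β = g ≫ f⟩ := hβ.factorIdeal_le_range P T hg
    refine ⟨qmap P (hpb.lift g x hx.symm), congrArg (qmap P) (hpb.lift_fst _ _ _), ?_⟩
    intro t' ht
    obtain ⟨s, rfl⟩ := qmap_surjective P T K t'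
    rw [← sub_eq_zero, ← qmap_sub, qmap_eq_zero_iff]
    apply mem_factorIdeal_of_isPullback_of_comp_mem P hpb hβ hj hP₁
    rw [← qmap_eq_zero_iff, Preadditive.sub_comp, hpb.lift_fst, qmap_sub, qmap_comp, ht,
      sub_self]

lemma hasKernel_of_isKernelOf {D : Type*} [Category D] [Preadditive D] {K X Y : D}
    {k : K ⟶ X} {f : X ⟶ Y} (h : IsKernelOf k f) : HasKernel f :=
  HasLimit.mk ⟨KernelFork.ofι k h.1,
    KernelFork.IsLimit.ofι k h.1
      (fun g hg => (h.2 g hg).exists.choose)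
      (fun g hg => (h.2 g hg).exists.choose_spec)
      (fun g hg _ hm => (h.2 g hg).unique hm (h.2 g hg).exists.choose_spec)⟩

theorem hasKernels_quotObj (E : ExactStructure C) (h : CondCov E.conf P) :
    HasKernels (QuotObj P) where
  has_limit := by
    rintro ⟨X⟩ ⟨Y⟩ φ
    obtain ⟨f, rfl⟩ := qmap_surjective P X Y φ
    obtain ⟨P₀, P₁, j, β, hconf, -, hP₁, hβ⟩ := h.2 Y
    obtain ⟨K, k, l, -, hpb⟩ := E.defl_pullback β ⟨P₁, j, hconf⟩ f
    exact hasKernel_of_isKernelOf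
      (isKernelOf_qmap_of_isPullback P hpb.flip hβ (E.ker_of_conf hconf) hP₁)

end QuotientKernel

theorem quotient_hasKernels_general {M : Type u} [Category.{v} M] [Preadditive M]
    (E : ExactStructure M) (P : Set M) (h : CondCov E.conf P) :
    HasKernels (QuotObj P) ∧
    ∀ {X Y P₀ P₁ K : M} (f : X ⟶ Y) (j : P₁ ⟶ P₀) (β : P₀ ⟶ Y) (k : K ⟶ X) (l : K ⟶ P₀),
      E.conf j β → P₀ ∈ P → P₁ ∈ P → IsPrecover P β → IsPullback k l f β →
      IsKernelOf (qmap P k) (qmap P f) :=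
  ⟨hasKernels_quotObj P E h, fun _ _ _ _ _ hconf _ hP₁ hβ hpb =>
    isKernelOf_qmap_of_isPullback P hpb hβ (E.ker_of_conf hconf) hP₁⟩

/-- if `𝒫` satisfies condition (▼), the quotient category `M/𝒫` has
kernels; more precisely, pulling back a conflation `0 → P₁ → P₀ → Y → 0` (with `β` a
`𝒫`-precover) along `f : X ⟶ Y` yields a morphism `k : K ⟶ X` with `k̄` the kernel
of `f̄`. -/
theorem quotient_hasKernels {M : Type u} [Category.{v} M] [Preadditive M]
    [HasBinaryBiproducts M] (E : ExactStructure M) (P : Set M) (hP : IsAddSubcat P)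
    (h : CondCov E.conf P) :
    HasKernels (QuotObj P) ∧
    ∀ {X Y P₀ P₁ K : M} (f : X ⟶ Y) (j : P₁ ⟶ P₀) (β : P₀ ⟶ Y) (k : K ⟶ X) (l : K ⟶ P₀),
      E.conf j β → P₀ ∈ P → P₁ ∈ P → IsPrecover P β → IsPullback k l f β →
      IsKernelOf (qmap P k) (qmap P f) :=
  quotient_hasKernels_general E P h

end PaperQEC
end

section
/- Let (M, E) be an exact category and 𝒫 a pseudo-cluster tilting subcategory of M. Then every conflation of M which is either Hom(𝒫,−)-exact or Hom(−,𝒫)-exact belongs to the class 𝒮. -/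
open CategoryTheory CategoryTheory.Limits

universe v u

namespace PaperQEC

/- Both cases are witnessed by padding `(i, d)` with the trivial conflations `O → X → X`
and `X → X → O` through a zero object `O`. -/

section TrivialConflations

variable {M : Type u} [Category.{v} M] [Preadditive M]

lemma ExactStructure.isZero_of_conf_id_right (E : ExactStructure M) {W X : M} {z : W ⟶ X}
    (h : E.conf z (𝟙 X)) : IsZero W := by
  obtain ⟨hz, hlift⟩ := E.ker_of_conf h
  obtain ⟨t, -, huniq⟩ := hlift (0 : W ⟶ X) (by simp)
  rw [IsZero.iff_id_eq_zero, huniq (𝟙 W) (by simpa using hz), huniq 0 (by simp)]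

lemma ExactStructure.isZero_of_conf_id_left (E : ExactStructure M) {X W : M} {p : X ⟶ W}
    (h : E.conf (𝟙 X) p) : IsZero W := by
  obtain ⟨hp, hdesc⟩ := E.coker_of_conf h
  obtain ⟨t, -, huniq⟩ := hdesc (0 : X ⟶ W) (by simp)
  rw [IsZero.iff_id_eq_zero, huniq (𝟙 W) (by simpa using hp), huniq 0 (by simp)]

lemma ExactStructure.exists_isZero (E : ExactStructure M) (X : M) : ∃ O : M, IsZero O := by
  obtain ⟨W, z, h⟩ := E.id_isDeflation X
  exact ⟨W, E.isZero_of_conf_id_right h⟩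

lemma ExactStructure.conf_zero_id (E : ExactStructure M) {O : M} (hO : IsZero O) (X : M) :
    E.conf (0 : O ⟶ X) (𝟙 X) := by
  obtain ⟨W, z, h⟩ := E.id_isDeflation X
  have hW := E.isZero_of_conf_id_right h
  exact E.isoClosed (hW.iso hO) (Iso.refl X) (Iso.refl X) (by simp [hW.eq_of_src z 0])
    (by simp) h

lemma ExactStructure.conf_id_zero (E : ExactStructure M) {O : M} (hO : IsZero O) (X : M) :
    E.conf (𝟙 X) (0 : X ⟶ O) := by
  obtain ⟨W, p, h⟩ := E.id_isInflation X
  have hW := E.isZero_of_conf_id_left h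
  exact E.isoClosed (Iso.refl X) (Iso.refl X) (hW.iso hO) (by simp)
    (by simp [hW.eq_of_tgt p 0]) h

end TrivialConflations

section TrivialHomExact

variable {C : Type u} [Category.{v} C] [Preadditive C] (P : Set C) {O : C}

lemma homCovExact_zero_id (hO : IsZero O) (Y : C) : HomCovExact P (0 : O ⟶ Y) (𝟙 Y) :=
  fun _ _ => ⟨fun _ _ => hO.eq_of_tgt _ _,
    fun u hu => ⟨0, by simpa using hu.symm⟩, fun h => ⟨h, Category.comp_id h⟩⟩

lemma homContraExact_zero_id (hO : IsZero O) (Z : C) : HomContraExact P (0 : O ⟶ Z) (𝟙 Z) :=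
  fun _ _ => ⟨fun g hg => by simpa using hg, fun u _ => ⟨u, Category.id_comp u⟩,
    fun h => ⟨0, hO.eq_of_src _ _⟩⟩

end TrivialHomExact

section MemS

variable {M : Type u} [Category.{v} M] [Preadditive M] (E : ExactStructure M) (P : Set M)
  {X Y Z : M} {i : X ⟶ Y} {d : Y ⟶ Z}

lemma memS_of_homCovExact (hconf : E.conf i d) (hcov : HomCovExact P i d) :
    memS E.conf P i d := by
  obtain ⟨O, hO⟩ := E.exists_isZero X
  refine ⟨hconf, X, O, Z, 𝟙 X, 0, i, d, 0, 𝟙 Z, E.conf_id_zero hO X, hconf,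
    E.conf_zero_id hO Z, hcov, homContraExact_zero_id P hO Z, Category.id_comp i, ?_,
    (Category.comp_id d).symm⟩
  rw [(E.ker_of_conf hconf).1, comp_zero]

lemma memS_of_homContraExact (hconf : E.conf i d) (hcontra : HomContraExact P i d) :
    memS E.conf P i d := by
  obtain ⟨O, hO⟩ := E.exists_isZero X
  exact ⟨hconf, O, X, Y, 0, 𝟙 X, 0, 𝟙 Y, i, d, E.conf_zero_id hO X, E.conf_zero_id hO Y,
    hconf, homCovExact_zero_id P hO Y, hcontra, zero_comp, by simp, (Category.id_comp d).symm⟩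

end MemS

theorem homExact_mem_S_general {M : Type u} [Category.{v} M] [Preadditive M]
    (E : ExactStructure M) (P : Set M)
    {X Y Z : M} (i : X ⟶ Y) (d : Y ⟶ Z)
    (hconf : E.conf i d) (hexact : HomCovExact P i d ∨ HomContraExact P i d) :
    memS E.conf P i d :=
  hexact.elim (memS_of_homCovExact E P hconf) (memS_of_homContraExact E P hconf)

/-- every conflation which is `Hom(𝒫,-)`-exact or `Hom(-,𝒫)`-exact
belongs to the class `𝒮`. -/
theorem homExact_mem_S {M : Type u} [Category.{v} M] [Preadditive M]
    [HasBinaryBiproducts M] (E : ExactStructure M) (P : Set M) (hP : IsAddSubcat P)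
    (h : PseudoClusterTilting E.conf P) {X Y Z : M} (i : X ⟶ Y) (d : Y ⟶ Z)
    (hconf : E.conf i d) (hexact : HomCovExact P i d ∨ HomContraExact P i d) :
    memS E.conf P i d :=
  homExact_mem_S_general E P i d hconf hexact

end PaperQEC
end
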